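/- arXiv:math/0312181 — 3 statements merged into one kernel-verified Lean document; each statement's English description precedes it below -/
import Mathlib

section
/- Let R be a discrete valuation ring with uniformizer ϖ and fraction field K, let d ≥ 1, and let λ = (λ₁ ≥ λ₂ ≥ ⋯ ≥ λ_d) be a nonincreasing sequence of integers. Let V be a d-dimensional K-vector space and suppose L and L′ are R-submodules of V for which there exist a K-basis (e₁, …, e_d) of V and a nonincreasing sequence of integers α = (α₁ ≥ ⋯ ≥ α_d) such that L is the R-span of (e₁, …, e_d), L′ is the R-span of (ϖ^{α₁}e₁, …, ϖ^{α_d}e_d), and α ≤ λ in the dominance order. Then ϖ^{‖λ‖} · L ⊆ L′, where ‖λ‖ = max( Σᵢ max(λᵢ, 0), − Σᵢ min(λᵢ, 0) ). -/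
/-!
Every exponent `αᵢ` is at most `α₁ ≤ λ₁ ≤ ∑ᵢ max(λᵢ, 0) ≤ ‖λ‖`, using that `α` is nonincreasing and
the first dominance inequality (for `d = 1`, the equality of
total sums). Hence `ϖ^{‖λ‖} eᵢ = ϖ^{‖λ‖ - αᵢ} (ϖ^{αᵢ} eᵢ)` with a nonnegative
power of `ϖ ∈ R`, which lies in `L'`; multiplication by `ϖ^{‖λ‖}` is `R`-linear, so it maps
`L = span_R (eᵢ)` into `L'`.
-/

open Finset

section Dominance

variable {d : ℕ} {α lam : Fin d → ℤ}

theorem apply_zero_le_of_dominates (hd : 0 < d)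
    (hdom_lt : ∀ k : ℕ, k < d →
      ∑ i ∈ univ.filter (fun i : Fin d => (i : ℕ) < k), α i
        ≤ ∑ i ∈ univ.filter (fun i : Fin d => (i : ℕ) < k), lam i)
    (hdom_eq : ∑ i, α i = ∑ i, lam i) :
    α ⟨0, hd⟩ ≤ lam ⟨0, hd⟩ := by
  have hfilter : univ.filter (fun i : Fin d => (i : ℕ) < 1) = {⟨0, hd⟩} := by
    ext i
    simp [Fin.ext_iff]
  rcases (Nat.succ_le_of_lt hd).eq_or_lt with hd1 | hd1
  · subst hd1
    rw [Fin.sum_univ_one, Fin.sum_univ_one] at hdom_eq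
    exact hdom_eq.le
  · simpa only [hfilter, sum_singleton] using hdom_lt 1 hd1

theorem le_sum_max_zero_of_dominates (hα : Antitone α)
    (hdom_lt : ∀ k : ℕ, k < d →
      ∑ i ∈ univ.filter (fun i : Fin d => (i : ℕ) < k), α i
        ≤ ∑ i ∈ univ.filter (fun i : Fin d => (i : ℕ) < k), lam i)
    (hdom_eq : ∑ i, α i = ∑ i, lam i) (i : Fin d) :
    α i ≤ ∑ j, max (lam j) 0 := by
  have hd : 0 < d := i.pos
  calc α i ≤ α ⟨0, hd⟩ := hα (Fin.le_def.mpr (Nat.zero_le i))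
    _ ≤ lam ⟨0, hd⟩ := apply_zero_le_of_dominates hd hdom_lt hdom_eq
    _ ≤ max (lam ⟨0, hd⟩) 0 := le_max_left _ _
    _ ≤ ∑ j, max (lam j) 0 :=
      single_le_sum (f := fun j => max (lam j) 0) (fun _ _ => le_max_right _ _) (mem_univ _)

end Dominance

section Span

variable {R K V ι : Type*} [CommRing R] [Field K] [Algebra R K]
  [AddCommGroup V] [Module K V] [Module R V] [IsScalarTower R K V]
  {ϖ : R}

theorem zpow_smul_eq_pow_smul_zpow_smul (hϖ : algebraMap R K ϖ ≠ 0) {a N : ℤ} (h : a ≤ N)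
    (v : V) :
    algebraMap R K ϖ ^ N • v = ϖ ^ (N - a).toNat • algebraMap R K ϖ ^ a • v := by
  rw [← IsScalarTower.algebraMap_smul K (ϖ ^ (N - a).toNat), smul_smul, map_pow, ← zpow_natCast,
    Int.toNat_of_nonneg (sub_nonneg.mpr h), ← zpow_add₀ hϖ, sub_add_cancel]

theorem zpow_smul_mem_span_of_le (hϖ : algebraMap R K ϖ ≠ 0) {e : ι → V} {α : ι → ℤ} {N : ℤ}
    (hN : ∀ i, α i ≤ N) {x : V} (hx : x ∈ Submodule.span R (Set.range e)) :
    algebraMap R K ϖ ^ N • x ∈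
      Submodule.span R (Set.range fun i => algebraMap R K ϖ ^ α i • e i) := by
  let f : V →ₗ[R] V := (algebraMap R K ϖ ^ N • LinearMap.id : V →ₗ[K] V).restrictScalars R
  suffices Submodule.span R (Set.range e) ≤
      (Submodule.span R (Set.range fun i => algebraMap R K ϖ ^ α i • e i)).comap f from this hx
  refine Submodule.span_le.mpr (Set.range_subset_iff.mpr fun i => ?_)
  rw [SetLike.mem_coe, Submodule.mem_comap, LinearMap.restrictScalars_apply, LinearMap.smul_apply,
    LinearMap.id_apply, zpow_smul_eq_pow_smul_zpow_smul hϖ (hN i)]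
  exact Submodule.smul_mem _ _ (Submodule.subset_span ⟨i, rfl⟩)

end Span

theorem pow_norm_smul_lattice_le_of_invariant_le_general
    (R : Type*) [CommRing R]
    (ϖ : R) (hϖ : Irreducible ϖ)
    (K : Type*) [Field K] [Algebra R K] [IsFractionRing R K]
    (d : ℕ) (lam : Fin d → ℤ)
    (V : Type*) [AddCommGroup V] [Module K V] [Module R V] [IsScalarTower R K V]
    (L L' : Submodule R V)
    (e : Module.Basis (Fin d) K V) (α : Fin d → ℤ) (hα : Antitone α)
    (hL : L = Submodule.span R (Set.range fun i => e i))
    (hL' : L' = Submodule.span R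
      (Set.range fun i => (algebraMap R K ϖ) ^ (α i) • e i))
    (hdom_lt : ∀ k : ℕ, k < d →
      ∑ i ∈ Finset.univ.filter (fun i : Fin d => (i : ℕ) < k), α i
        ≤ ∑ i ∈ Finset.univ.filter (fun i : Fin d => (i : ℕ) < k), lam i)
    (hdom_eq : ∑ i, α i = ∑ i, lam i) :
    ∀ x ∈ L,
      (algebraMap R K ϖ) ^ (max (∑ i, max (lam i) 0) (-∑ i, min (lam i) 0)) • x ∈ L' := by
  subst hL hL'
  intro x hx
  have hϖK : algebraMap R K ϖ ≠ 0 :=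
    (map_ne_zero_iff _ (IsFractionRing.injective R K)).mpr hϖ.ne_zero
  refine zpow_smul_mem_span_of_le hϖK (fun i => ?_) hx
  exact (le_sum_max_zero_of_dominates hα hdom_lt hdom_eq i).trans (le_max_left _ _)

/-- **Cramer-rule bound for lattice modifications.** Let `R` be a discrete valuation ring with
uniformizer `ϖ` and fraction field `K`, `d ≥ 1`, and `λ` a nonincreasing sequence of `d`
integers. If `L` and `L'` are `R`-submodules of a `d`-dimensional `K`-vector space `V` such
that, for some `K`-basis `e` of `V` and some nonincreasing sequence `α` with `α ≤ λ` in the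
dominance order, `L` is the `R`-span of `(e₁, …, e_d)` and `L'` is the `R`-span of
`(ϖ^{α₁} e₁, …, ϖ^{α_d} e_d)`, then `ϖ^{‖λ‖} • L ⊆ L'`, where
`‖λ‖ = max (∑ᵢ max(λᵢ, 0)) (-∑ᵢ min(λᵢ, 0))`. -/
theorem pow_norm_smul_lattice_le_of_invariant_le
    (R : Type*) [CommRing R] [IsDomain R] [IsDiscreteValuationRing R]
    (ϖ : R) (hϖ : Irreducible ϖ)
    (K : Type*) [Field K] [Algebra R K] [IsFractionRing R K]
    (d : ℕ) (hd : 1 ≤ d) (lam : Fin d → ℤ) (hlam : Antitone lam)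
    (V : Type*) [AddCommGroup V] [Module K V] [Module R V] [IsScalarTower R K V]
    (hdim : Module.finrank K V = d)
    (L L' : Submodule R V)
    (e : Module.Basis (Fin d) K V) (α : Fin d → ℤ) (hα : Antitone α)
    (hL : L = Submodule.span R (Set.range fun i => e i))
    (hL' : L' = Submodule.span R
      (Set.range fun i => (algebraMap R K ϖ) ^ (α i) • e i))
    (hdom_lt : ∀ k : ℕ, k < d →
      ∑ i ∈ Finset.univ.filter (fun i : Fin d => (i : ℕ) < k), α i
        ≤ ∑ i ∈ Finset.univ.filter (fun i : Fin d => (i : ℕ) < k), lam i)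
    (hdom_eq : ∑ i, α i = ∑ i, lam i) :
    ∀ x ∈ L,
      (algebraMap R K ϖ) ^ (max (∑ i, max (lam i) 0) (-∑ i, min (lam i) 0)) • x ∈ L' :=
  pow_norm_smul_lattice_le_of_invariant_le_general R ϖ hϖ K d lam V L L' e α hα hL hL' hdom_lt
    hdom_eq
end

section
/- Let K be a finite field with q elements and L the extension of K of degree s inside a fixed algebraic closure, let F = K((t)) ⊆ E = L((t)) be the corresponding fields of formal Laurent series, and let σ be the automorphism of E fixing t and acting on each coefficient by x ↦ x^q. Suppose γ₀ ∈ F^× is a scalar and there exist d ≥ 1 and an invertible d × d matrix δ over E with γ₀ · I_d = δ · σ(δ) · σ²(δ) ⋯ σ^{s−1}(δ), where σ is applied entrywise. Then s divides d · v(γ₀), where v : F^× → ℤ is the t-adic valuation. -/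
/-!
Taking determinants turns the identity into `γ₀ ^ d = ∏_{k < s} σᵏ (det δ)`. The order `v` is
additive on products, and `σ`, which raises coefficients to the `q`-th power, does not change the
support of a series, hence not its order. So `d • v γ₀ = s • v (det δ)`.
-/

namespace HahnSeries

theorem orderTop_eq_of_coeff_eq_zero_iff {Γ R : Type*} [LinearOrder Γ] [Zero R] {x y : R⟦Γ⟧}
    (h : ∀ g, x.coeff g = 0 ↔ y.coeff g = 0) : x.orderTop = y.orderTop :=
  le_antisymm (le_orderTop_iff_forall.2 fun g hg => (h g).1 (coeff_eq_zero_of_lt_orderTop hg))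
    (le_orderTop_iff_forall.2 fun g hg => (h g).2 (coeff_eq_zero_of_lt_orderTop hg))

theorem orderTop_eq_of_coeff_eq_pow {Γ R : Type*} [LinearOrder Γ] [MonoidWithZero R]
    [NoZeroDivisors R] {x y : R⟦Γ⟧} {q : ℕ} (hq : q ≠ 0) (h : ∀ g, y.coeff g = x.coeff g ^ q) :
    y.orderTop = x.orderTop :=
  orderTop_eq_of_coeff_eq_zero_iff fun g => by rw [h, pow_eq_zero_iff hq]

variable {Γ R : Type*} [AddCommMonoid Γ] [LinearOrder Γ] [IsOrderedCancelAddMonoid Γ]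
  [CommSemiring R] [NoZeroDivisors R] [Nontrivial R]

theorem orderTop_prod {ι : Type*} (s : Finset ι) (f : ι → R⟦Γ⟧) :
    (∏ i ∈ s, f i).orderTop = ∑ i ∈ s, (f i).orderTop := by
  classical
  induction s using Finset.induction_on with
  | empty => simp
  | insert i s hi ih => rw [Finset.prod_insert hi, Finset.sum_insert hi, orderTop_mul, ih]

theorem orderTop_pow (x : R⟦Γ⟧) (n : ℕ) : (x ^ n).orderTop = n • x.orderTop := by
  simpa using orderTop_prod (Finset.range n) fun _ => x

theorem orderTop_prod_iterate {f : R⟦Γ⟧ → R⟦Γ⟧} (hf : ∀ x, (f x).orderTop = x.orderTop)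
    (x : R⟦Γ⟧) (n : ℕ) : (∏ k : Fin n, f^[k] x).orderTop = n • x.orderTop := by
  have hf_iterate (k : ℕ) : (f^[k] x).orderTop = x.orderTop :=
    congrFun (Function.iterate_invariant (g := orderTop) (funext hf) k) x
  simp [orderTop_prod, hf_iterate]

end HahnSeries

namespace Matrix

theorem det_list_prod_ofFn_map_iterate {n : Type*} [Fintype n] [DecidableEq n] {R : Type*}
    [CommRing R] (σ : R ≃+* R) (δ : Matrix n n R) (s : ℕ) :
    (List.ofFn fun k : Fin s => δ.map fun x => (⇑σ)^[(k : ℕ)] x).prod.det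
      = ∏ k : Fin s, (⇑σ)^[(k : ℕ)] δ.det := by
  rw [← coe_detMonoidHom, map_list_prod, List.map_ofFn, List.prod_ofFn]
  refine Finset.prod_congr rfl fun k _ => ?_
  simp only [Function.comp_apply, coe_detMonoidHom, ← RingAut.coe_pow]
  exact ((σ ^ (k : ℕ)).map_det δ).symm

end Matrix

open HahnSeries

theorem dvd_mul_order_of_scalar_is_twisted_norm_general
    (L : Type*) [Field L]
    (q s : ℕ)
    (σ : LaurentSeries L ≃+* LaurentSeries L)
    (hσ : ∀ (f : LaurentSeries L) (n : ℤ), (σ f).coeff n = (f.coeff n) ^ q)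
    (γ₀ : LaurentSeries L) (hγ₀ : γ₀ ≠ 0)
    (d : ℕ)
    (δ : Matrix (Fin d) (Fin d) (LaurentSeries L)) (hδ : IsUnit δ)
    (heq : γ₀ • (1 : Matrix (Fin d) (Fin d) (LaurentSeries L))
      = (List.ofFn fun k : Fin s => δ.map fun x => (⇑σ)^[(k : ℕ)] x).prod) :
    (s : ℤ) ∣ (d : ℤ) * γ₀.order := by
  -- for `q = 0` the hypothesis would make every coefficient of `σ 0 = 0` equal to `1`
  have hq : q ≠ 0 := by
    rintro rfl
    simpa using hσ 0 0
  have hdet : γ₀ ^ d = ∏ k : Fin s, (⇑σ)^[(k : ℕ)] δ.det := by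
    simpa [Matrix.det_smul, Matrix.det_list_prod_ofFn_map_iterate] using congrArg Matrix.det heq
  have hδ0 : δ.det ≠ 0 := ((Matrix.isUnit_iff_isUnit_det δ).1 hδ).ne_zero
  have horder : d • γ₀.orderTop = s • δ.det.orderTop := by
    rw [← orderTop_pow, hdet,
      orderTop_prod_iterate (fun f => orderTop_eq_of_coeff_eq_pow hq (hσ f))]
  rw [← order_eq_orderTop_of_ne_zero hγ₀, ← order_eq_orderTop_of_ne_zero hδ0,
    ← WithTop.coe_nsmul, ← WithTop.coe_nsmul, WithTop.coe_inj] at horder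
  exact ⟨δ.det.order, by simpa using horder⟩

/-- Let `K` be a finite field with `q` elements and `L/K` the extension of degree `s`, with
`F = K((t)) ⊆ E = L((t))` the corresponding Laurent series fields, and `σ` the automorphism
of `E` fixing `t` and raising each coefficient to the `q`-th power.  If `γ₀ ∈ F^×` is a
scalar (a nonzero Laurent series with coefficients in `K`) such that
`γ₀ · I_d = δ · σ(δ) · σ²(δ) ⋯ σ^{s-1}(δ)` for some invertible `d × d` matrix `δ` over `E`,
then `s` divides `d · v(γ₀)` where `v` is the `t`-adic valuation (the order). -/
theorem dvd_mul_order_of_scalar_is_twisted_norm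
    (K L : Type*) [Field K] [Field L] [Fintype K] [Algebra K L]
    [FiniteDimensional K L]
    (q s : ℕ) (hq : Fintype.card K = q) (hs : Module.finrank K L = s)
    (σ : LaurentSeries L ≃+* LaurentSeries L)
    (hσ : ∀ (f : LaurentSeries L) (n : ℤ), (σ f).coeff n = (f.coeff n) ^ q)
    (γ₀ : LaurentSeries L) (hγ₀ : γ₀ ≠ 0)
    (hγK : ∀ n : ℤ, γ₀.coeff n ∈ (algebraMap K L).range)
    (d : ℕ) (hd : 1 ≤ d)
    (δ : Matrix (Fin d) (Fin d) (LaurentSeries L)) (hδ : IsUnit δ)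
    (heq : γ₀ • (1 : Matrix (Fin d) (Fin d) (LaurentSeries L))
      = (List.ofFn fun k : Fin s => δ.map fun x => (⇑σ)^[(k : ℕ)] x).prod) :
    (s : ℤ) ∣ (d : ℤ) * γ₀.order :=
  dvd_mul_order_of_scalar_is_twisted_norm_general L q s σ hσ γ₀ hγ₀ d δ hδ heq
end

section
/- Let S be a set, σ : S → S a bijection, and r, s ≥ 1 integers. Let u : ℤ/rℤ → S be an injective map satisfying σ^s(u(i)) = u(i+1) for every i ∈ ℤ/rℤ. Assume there exists N ≥ 1 with σ^N(u(0)) = u(0) (i.e. the σ-orbit of u(0) is finite), and assume that s is the least positive integer t for which there exists j ∈ ℤ/rℤ with σ^t(u(i)) = u(i+j) for all i ∈ ℤ/rℤ. Then the least positive integer n with σ^n(u(0)) = u(0) equals r·s; in particular the σ-orbit of u(0) has exactly r·s elements. -/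
/-- **Description of cyclic points.** Let `σ` be a bijection of a set `S`, `r, s ≥ 1`, and
`u : ℤ/rℤ → S` an injective map with `σ^s (u i) = u (i+1)` for all `i`.  Assume the `σ`-orbit
of `u 0` is finite, and that `s` is the least positive integer `t` for which some `j ∈ ℤ/rℤ`
satisfies `σ^t (u i) = u (i + j)` for all `i`.  Then the least positive integer `n` with
`σ^n (u 0) = u 0` is exactly `r * s` (so the `σ`-orbit of `u 0` has `r * s` elements). -/
theorem least_period_eq_of_cyclic_point
    (S : Type*) (σ : Equiv.Perm S) (r s : ℕ) (hr : 1 ≤ r) (hs : 1 ≤ s)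
    (u : ZMod r → S) (hu : Function.Injective u)
    (hstep : ∀ i : ZMod r, (σ ^ s) (u i) = u (i + 1))
    (hfin : ∃ N : ℕ, 1 ≤ N ∧ (σ ^ N) (u 0) = u 0)
    (hleast : IsLeast {t : ℕ | 0 < t ∧ ∃ j : ZMod r, ∀ i, (σ ^ t) (u i) = u (i + j)} s) :
    IsLeast {n : ℕ | 0 < n ∧ (σ ^ n) (u 0) = u 0} (r * s) := by
  haveI : NeZero r := ⟨by omega⟩
  have key : ∀ k : ℕ, ∀ i : ZMod r, (σ ^ (k * s)) (u i) = u (i + (k : ZMod r)) := by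
    intro k
    induction k with
    | zero => intro i; simp
    | succ k ih =>
      intro i
      have h1 : (k + 1) * s = k * s + s := by ring
      rw [h1, pow_add]
      simp only [Equiv.Perm.mul_apply]
      rw [hstep, ih]
      push_cast
      ring_nf
  have hmem : (σ ^ (r * s)) (u 0) = u 0 := by
    have := key r 0
    simpa using this
  refine ⟨⟨by positivity, hmem⟩, ?_⟩
  rintro n ⟨hn, hσn⟩
  -- σ^n fixes every u i
  have hfix : ∀ i : ZMod r, (σ ^ n) (u i) = u i := by
    intro i
    have hki : ((i.val : ℕ) : ZMod r) = i := by
      simp [ZMod.natCast_val, ZMod.cast_id]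
    have h1 : (σ ^ (i.val * s)) (u 0) = u i := by
      rw [key i.val 0, zero_add, hki]
    have hcomm : (σ ^ n) ((σ ^ (i.val * s)) (u 0)) =
        (σ ^ (i.val * s)) ((σ ^ n) (u 0)) := by
      have : σ ^ n * σ ^ (i.val * s) = σ ^ (i.val * s) * σ ^ n := by
        rw [← pow_add, ← pow_add, Nat.add_comm]
      calc (σ ^ n) ((σ ^ (i.val * s)) (u 0)) = (σ ^ n * σ ^ (i.val * s)) (u 0) := rfl
        _ = (σ ^ (i.val * s) * σ ^ n) (u 0) := by rw [this]
        _ = (σ ^ (i.val * s)) ((σ ^ n) (u 0)) := rfl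
    rw [← h1, hcomm, hσn, h1]
  have hfixmul : ∀ m : ℕ, ∀ i : ZMod r, (σ ^ (m * n)) (u i) = u i := by
    intro m
    induction m with
    | zero => intro i; simp
    | succ m ih =>
      intro i
      have h1 : (m + 1) * n = m * n + n := by ring
      rw [h1, pow_add]
      simp only [Equiv.Perm.mul_apply]
      rw [hfix, ih]
  -- Bezout: find x y : ℕ with gcd n s + x * n = y * s
  set g : ℕ := Nat.gcd n s with hg
  have hgpos : 0 < g := Nat.gcd_pos_of_pos_left s hn
  obtain ⟨x, y, hxy⟩ : ∃ x y : ℕ, g + x * n = y * s := by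
    have hb := Nat.gcd_eq_gcd_ab n s
    set a := Nat.gcdA n s
    set b := Nat.gcdB n s
    set K : ℕ := a.natAbs + b.natAbs + 1 with hK
    have hKc : (K : ℤ) = (a.natAbs : ℤ) + (b.natAbs : ℤ) + 1 := by
      push_cast [hK]; ring
    have hsK : (K : ℤ) ≤ (s : ℤ) * K := le_mul_of_one_le_left (by positivity)
      (by exact_mod_cast hs)
    have hnK : (K : ℤ) ≤ (n : ℤ) * K := le_mul_of_one_le_left (by positivity)
      (by exact_mod_cast hn)
    have hx0 : (0 : ℤ) ≤ -a + (s : ℤ) * K := by omega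
    have hy0 : (0 : ℤ) ≤ b + (n : ℤ) * K := by omega
    refine ⟨(-a + (s : ℤ) * K).toNat, (b + (n : ℤ) * K).toNat, ?_⟩
    have : (g : ℤ) + (-a + (s : ℤ) * K) * n = (b + (n : ℤ) * K) * s := by
      rw [hg]
      push_cast [hb]
      ring
    have h2 : (g : ℤ) + ((-a + (s : ℤ) * K).toNat : ℤ) * n
        = ((b + (n : ℤ) * K).toNat : ℤ) * s := by
      rw [Int.toNat_of_nonneg hx0, Int.toNat_of_nonneg hy0]; exact this
    exact_mod_cast h2
  -- σ^g shifts by y, so g is in the set of hleast, hence s ≤ g; also g ∣ s so g = s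
  have hgmem : ∀ i : ZMod r, (σ ^ g) (u i) = u (i + (y : ZMod r)) := by
    intro i
    have h1 : (σ ^ (g + x * n)) (u i) = (σ ^ g) (u i) := by
      rw [pow_add]
      simp only [Equiv.Perm.mul_apply]
      rw [hfixmul]
    rw [← h1, hxy, key]
  have hsle : s ≤ g := hleast.2 ⟨hgpos, y, hgmem⟩
  have hgs : g ∣ s := Nat.gcd_dvd_right n s
  have hgeq : g = s := Nat.le_antisymm (Nat.le_of_dvd (by omega) hgs) hsle
  have hsdvd : s ∣ n := hgeq ▸ Nat.gcd_dvd_left n s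
  obtain ⟨k, hk⟩ := hsdvd
  have hkpos : 0 < k := Nat.pos_of_ne_zero fun h => by subst h; simp at hk; omega
  have hk0 : u ((0 : ZMod r) + (k : ZMod r)) = u 0 := by
    rw [← key k 0, Nat.mul_comm, ← hk, hσn]
  have hkz : (k : ZMod r) = 0 := by
    have := hu hk0
    simpa using this
  have hrk : r ∣ k := (ZMod.natCast_eq_zero_iff k r).1 hkz
  have hrlek : r ≤ k := Nat.le_of_dvd hkpos hrk
  calc r * s ≤ k * s := Nat.mul_le_mul_right s hrlek
    _ = n := by rw [hk, Nat.mul_comm]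
end
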